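/- For every natural number m and all real numbers x and z, the coefficient of t^m in the formal power series (1+t)^x / (1 + t(z+1))^2 equals Σ_{0≤l≤n≤m} (-1)^n · C(n,l) · C(x+l, m-n) · (1+z)^{n+l} · (1-z)^{n-l}. -/

import Mathlib

open Finset PowerSeries

/-!
Write `c = 1 + z` and `q = 1 - (1 + c t)^2 = -c t (c (1 + t) + (1 - z))`. Since `q` has no
constant term, `1 / (1 + c t)^2 = Σ_n q^n`, and only `n ≤ m` contribute to the coefficient of
`t^m`. Expanding `(c (1 + t) + (1 - z))^n` binomially and absorbing `(1 + t)^l` into the binomial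
series via `(1 + t)^x (1 + t)^l = (1 + t)^(x + l)` turns the `n`-th summand into the inner sum.
-/

/-- Generalized binomial coefficient `C(x, k) = x(x-1)⋯(x-k+1)/k!` for real `x`. -/
noncomputable def gchoose (x : ℝ) (k : ℕ) : ℝ :=
  (∏ i ∈ Finset.range k, (x - i)) / (Nat.factorial k)

/-- The binomial series `(1+t)^x = Σ C(x,k) t^k` as a formal power series. -/
noncomputable def binomSeries (x : ℝ) : PowerSeries ℝ :=
  PowerSeries.mk fun k => gchoose x k

theorem PowerSeries.coeff_mul_inv_one_sub_eq_sum {k : Type*} [Field k] (f q : k⟦X⟧)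
    (hq : constantCoeff q = 0) (m : ℕ) :
    coeff m (f * (1 - q)⁻¹) = ∑ n ∈ range (m + 1), coeff m (f * q ^ n) := by
  have hunit : constantCoeff (1 - q) ≠ 0 := by simp [hq]
  have hgeom : ∑ n ∈ range (m + 1), q ^ n = (1 - q)⁻¹ * (1 - q ^ (m + 1)) := by
    rw [← mul_neg_geom_sum, ← mul_assoc, PowerSeries.inv_mul_cancel _ hunit, one_mul]
  have htail : X ^ (m + 1) ∣ f * (1 - q)⁻¹ * q ^ (m + 1) :=
    Dvd.dvd.mul_left (pow_dvd_pow_of_dvd (X_dvd_iff.mpr hq) _) _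
  rw [← map_sum, ← mul_sum, hgeom, mul_sub, mul_one, mul_sub, ← mul_assoc, map_sub,
    X_pow_dvd_iff.mp htail m m.lt_succ_self, sub_zero]

lemma gchoose_eq_choose (x : ℝ) (k : ℕ) : gchoose x k = Ring.choose x k := by
  rw [Ring.choose_eq_smul, ← Polynomial.aeval_eq_smeval, Polynomial.aeval_def,
    Polynomial.eval₂_eq_eval_map, descPochhammer_map, descPochhammer_eval_eq_prod_range,
    smul_eq_mul, gchoose, div_eq_inv_mul]

lemma binomSeries_eq_binomialSeries (x : ℝ) :
    binomSeries x = PowerSeries.binomialSeries ℝ x := by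
  ext k
  simp [binomSeries, gchoose_eq_choose]

lemma binomSeries_add_natCast (x : ℝ) (l : ℕ) :
    binomSeries (x + l) = binomSeries x * (1 + X) ^ l := by
  simp only [binomSeries_eq_binomialSeries, binomialSeries_add, binomialSeries_nat]

lemma coeff_binomSeries_mul_X_mul_pow (x a b : ℝ) {m n : ℕ} (hn : n ≤ m) :
    coeff m (binomSeries x * (X * (C a * (1 + X) + C b)) ^ n) =
      ∑ l ∈ range (n + 1), (n.choose l : ℝ) * gchoose (x + l) (m - n) * a ^ l * b ^ (n - l) := by
  rw [mul_pow, mul_left_comm, coeff_X_pow_mul', if_pos hn, add_pow, mul_sum, map_sum]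
  refine sum_congr rfl fun l _ => ?_
  have hterm : binomSeries x * ((C a * (1 + X)) ^ l * C b ^ (n - l) * (n.choose l : ℝ⟦X⟧)) =
      C ((n.choose l : ℝ) * a ^ l * b ^ (n - l)) * binomSeries (x + l) := by
    rw [binomSeries_add_natCast, mul_pow]
    simp only [map_mul, map_pow, map_natCast]
    ring
  rw [hterm, coeff_C_mul, binomSeries, coeff_mk]
  ring

theorem coeff_binom_div_linear_sq (m : ℕ) (x z : ℝ) :
    PowerSeries.coeff (R := ℝ) m
        (binomSeries x * ((1 + PowerSeries.C (R := ℝ) (z + 1) * PowerSeries.X) ^ 2)⁻¹) =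
      ∑ n ∈ Finset.range (m + 1), ∑ l ∈ Finset.range (n + 1),
        (-1 : ℝ) ^ n * (n.choose l : ℝ) * gchoose (x + l) (m - n) *
          (1 + z) ^ (n + l) * (1 - z) ^ (n - l) := by
  set q : ℝ⟦X⟧ := C (-(1 + z)) * (X * (C (1 + z) * (1 + X) + C (1 - z))) with hq
  have hsq : (1 + C (z + 1) * X) ^ 2 = 1 - q := by
    simp only [hq, map_neg, map_add, map_sub, map_one]
    ring
  rw [hsq, coeff_mul_inv_one_sub_eq_sum _ _ (by simp [hq])]
  refine sum_congr rfl fun n hn => ?_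
  rw [hq, mul_pow, mul_left_comm, ← map_pow, coeff_C_mul,
    coeff_binomSeries_mul_X_mul_pow _ _ _ (Nat.lt_succ_iff.mp (mem_range.mp hn)), mul_sum]
  refine sum_congr rfl fun l _ => ?_
  rw [neg_pow, pow_add]
  ring
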